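/- Let A ∈ ℤ^{n×n} be nonsingular with Smith form S = diag(s_1,…,s_n), and let M ∈ ℤ^{n×n} be a Smith massager for A. Suppose H ∈ ℤ^{n×n} is lower triangular with positive diagonal entries h_1,…,h_n, has each off-diagonal entry in column j lying in the interval [0, h_j), and satisfies det H = det S and HM ≡ 0 (colmod S). Then H is the lower triangular row Hermite form of A; in particular, H = UA for some unimodular U ∈ ℤ^{n×n}. -/

import Mathlib

open Matrix

/-- A square integer matrix is unimodular if its determinant is `±1`. -/
def IsUnimodular {ι : Type*} [Fintype ι] [DecidableEq ι] (U : Matrix ι ι ℤ) : Prop :=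
  U.det = 1 ∨ U.det = -1

/-- `S` is a Smith form of `A`: it is diagonal with positive diagonal entries
forming a divisibility chain, and `P * A * Q = S` for some unimodular `P`, `Q`. -/
def IsSmithForm {n : ℕ} (A S : Matrix (Fin n) (Fin n) ℤ) : Prop :=
  (∀ i j : Fin n, i ≠ j → S i j = 0) ∧ (∀ i, 0 < S i i) ∧
  (∀ i j : Fin n, i ≤ j → S i i ∣ S j j) ∧
  ∃ P Q : Matrix (Fin n) (Fin n) ℤ, IsUnimodular P ∧ IsUnimodular Q ∧ P * A * Q = S

/-- `B ≡ C (colmod S)`: column `j` of `B` is congruent to column `j` of `C`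
modulo the `j`-th diagonal entry of `S`. -/
def ColMod {ι : Type*} [Fintype ι] (S B C : Matrix ι ι ℤ) : Prop :=
  ∀ i j, S j j ∣ (B i j - C i j)

/-- `M` is a Smith massager for `A` (with Smith form `S`):
`A * M ≡ 0 (colmod S)` and `W * M ≡ I (colmod S)` for some integer matrix `W`. -/
def IsSmithMassager {ι : Type*} [Fintype ι] [DecidableEq ι] (A S M : Matrix ι ι ℤ) : Prop :=
  ColMod S (A * M) 0 ∧ ∃ W : Matrix ι ι ℤ, ColMod S (W * M) 1

/-- `H` is the lower triangular row Hermite form of `B`: lower triangular with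
positive diagonal entries, off-diagonal entries in column `j` reduced into
`[0, H j j)`, and `H = U * B` for some unimodular `U`. -/
def IsLowerHermiteFormOf {n : ℕ} (H B : Matrix (Fin n) (Fin n) ℤ) : Prop :=
  (∀ i j : Fin n, i < j → H i j = 0) ∧ (∀ j, 0 < H j j) ∧
  (∀ i j : Fin n, j < i → 0 ≤ H i j ∧ H i j < H j j) ∧
  ∃ U : Matrix (Fin n) (Fin n) ℤ, IsUnimodular U ∧ H = U * B

/-!
Let `PAQ = S`. A matrix `X` satisfies `XQ ≡ 0 (colmod S)` iff `XQ = TS` for some `T`, i.e. iff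
`X = TPA` lies in the row lattice of `A`. Reducing `X ↦ XQ` and `X ↦ XM` column-wise modulo `S`
gives two surjections onto the same finite group `∏ ℤ/s_j` (for `M` by the massager witness `W`),
and `AM ≡ 0` says that the kernel of the first lies in the kernel of the second; so the kernels
agree. Hence `HM ≡ 0` forces `H = UA` with `U = TP`, and `det H = det S` makes `U` unimodular.
-/

theorem AddMonoidHom.ker_eq_of_le_of_surjective {α β : Type*} [AddGroup α] [AddGroup β] [Finite β]
    {f g : α →+ β} (hf : Function.Surjective f) (hg : Function.Surjective g)
    (hle : f.ker ≤ g.ker) : f.ker = g.ker := by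
  have hindex : f.ker.index = g.ker.index := by
    rw [AddSubgroup.index_ker, AddSubgroup.index_ker, f.range_eq_top_of_surjective hf,
      g.range_eq_top_of_surjective hg]
  by_contra hne
  exact (AddSubgroup.index_strictAnti (lt_of_le_of_ne hle hne)).ne hindex.symm

theorem Matrix.IsDiag.det_pos {ι R : Type*} [Fintype ι] [DecidableEq ι] [CommRing R]
    [PartialOrder R] [IsStrictOrderedRing R] {S : Matrix ι ι R} (hS : S.IsDiag)
    (hpos : ∀ i, 0 < S i i) : 0 < S.det := by
  rw [← hS.diagonal_diag, det_diagonal]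
  exact Finset.prod_pos fun i _ => hpos i

theorem isUnimodular_iff {ι : Type*} [Fintype ι] [DecidableEq ι] (U : Matrix ι ι ℤ) :
    IsUnimodular U ↔ IsUnit U.det :=
  Int.isUnit_iff.symm

section

variable {ι : Type*} [Fintype ι] {A S M P Q X B C T W : Matrix ι ι ℤ}

theorem eq_mul_mul_of_mul_eq_mul [DecidableEq ι] (hPAQ : P * A * Q = S) (hQ : IsUnit Q.det)
    (h : T * S = X * Q) : X = T * P * A := by
  rw [← mul_nonsing_inv_cancel_right Q X hQ, ← h, ← hPAQ]
  simp only [Matrix.mul_assoc, mul_nonsing_inv _ hQ, Matrix.mul_one]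

namespace ColMod

theorem mul_left (h : ColMod S B C) (X : Matrix ι ι ℤ) : ColMod S (X * B) (X * C) := by
  intro i j
  rw [← Matrix.sub_apply, ← Matrix.mul_sub, mul_apply]
  exact Finset.dvd_sum fun k _ => (h k j).mul_left _

theorem exists_mul_eq [DecidableEq ι] (hS : S.IsDiag) (h : ColMod S B 0) : ∃ T, T * S = B := by
  refine ⟨of fun i j => B i j / S j j, ?_⟩
  ext i j
  rw [← hS.diagonal_diag, mul_diagonal]
  simpa using Int.ediv_mul_cancel (by simpa using h i j)

def residue (S : Matrix ι ι ℤ) : Matrix ι ι ℤ →+ (ι → (j : ι) → ZMod (S j j).natAbs) where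
  toFun B i j := B i j
  map_zero' := by ext; simp
  map_add' B C := by ext; simp

theorem residue_eq_residue_iff : residue S B = residue S C ↔ ColMod S B C := by
  simp only [residue, AddMonoidHom.coe_mk, ZeroHom.coe_mk, funext_iff,
    ZMod.intCast_eq_intCast_iff_dvd_sub, Int.natAbs_dvd, dvd_sub_comm]
  rfl

theorem residue_eq_zero_iff : residue S B = 0 ↔ ColMod S B 0 := by
  rw [← residue_eq_residue_iff, map_zero]

def residueMulRight (S B : Matrix ι ι ℤ) : Matrix ι ι ℤ →+ (ι → (j : ι) → ZMod (S j j).natAbs) :=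
  (residue S).comp (AddMonoidHom.mulRight B)

theorem mem_ker_residueMulRight : X ∈ (residueMulRight S B).ker ↔ ColMod S (X * B) 0 :=
  residue_eq_zero_iff

theorem residueMulRight_surjective [DecidableEq ι] (hW : ColMod S (W * B) 1) :
    Function.Surjective (residueMulRight S B) := by
  intro y
  set C : Matrix ι ι ℤ := of fun i j => ((y i j).cast : ℤ)
  have hC : residue S C = y := by ext i j; exact ZMod.intCast_zmod_cast (y i j)
  refine ⟨C * W, ?_⟩
  rw [← hC, residueMulRight, AddMonoidHom.comp_apply, AddMonoidHom.coe_mulRight,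
    residue_eq_residue_iff]
  simpa [Matrix.mul_assoc] using hW.mul_left C

theorem ker_residueMulRight_le [DecidableEq ι] (hS : S.IsDiag) (hPAQ : P * A * Q = S)
    (hQ : IsUnit Q.det) (hAM : ColMod S (A * M) 0) : (residueMulRight S Q).ker ≤ (residueMulRight S M).ker := by
  intro X hX
  obtain ⟨T, hT⟩ := (mem_ker_residueMulRight.mp hX).exists_mul_eq hS
  rw [mem_ker_residueMulRight, eq_mul_mul_of_mul_eq_mul hPAQ hQ hT, Matrix.mul_assoc]
  simpa using hAM.mul_left (T * P)

theorem mul_zero_of_isSmithMassager [DecidableEq ι] (hS : S.IsDiag) (hSpos : ∀ j, 0 < S j j)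
    (hPAQ : P * A * Q = S) (hQ : IsUnit Q.det) (hM : IsSmithMassager A S M)
    (hXM : ColMod S (X * M) 0) : ColMod S (X * Q) 0 := by
  obtain ⟨hAM, W, hWM⟩ := hM
  have (j : ι) : NeZero (S j j).natAbs := ⟨by have := hSpos j; omega⟩
  have hQQ : ColMod S (Q⁻¹ * Q) 1 := by simp [nonsing_inv_mul _ hQ, ColMod]
  have hker := AddMonoidHom.ker_eq_of_le_of_surjective (residueMulRight_surjective hQQ)
    (residueMulRight_surjective hWM) (ker_residueMulRight_le hS hPAQ hQ hAM)
  rwa [← mem_ker_residueMulRight, hker, mem_ker_residueMulRight]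

end ColMod

end

theorem hermiteForm_of_detEq_and_colmod_general {n : ℕ}
    (A S M : Matrix (Fin n) (Fin n) ℤ)
    (hS : IsSmithForm A S) (hM : IsSmithMassager A S M)
    (H : Matrix (Fin n) (Fin n) ℤ)
    (hHlow : ∀ i j : Fin n, i < j → H i j = 0)
    (hHdiag : ∀ j, 0 < H j j)
    (hHred : ∀ i j : Fin n, j < i → 0 ≤ H i j ∧ H i j < H j j)
    (hdet : H.det = S.det)
    (hHM : ColMod S (H * M) 0) :
    IsLowerHermiteFormOf H A := by
  obtain ⟨hSdiag, hSpos, -, P, Q, hP, hQ, hPAQ⟩ := hS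
  replace hSdiag : S.IsDiag := hSdiag
  rw [isUnimodular_iff] at hP hQ
  obtain ⟨T, hT⟩ := (hHM.mul_zero_of_isSmithMassager hSdiag hSpos hPAQ hQ hM).exists_mul_eq hSdiag
  have hdetT : T.det = Q.det := by
    have hTS := congrArg det hT
    rw [det_mul, det_mul, hdet, mul_comm] at hTS
    exact mul_left_cancel₀ (hSdiag.det_pos hSpos).ne' hTS
  refine ⟨hHlow, hHdiag, hHred, T * P, ?_, eq_mul_mul_of_mul_eq_mul hPAQ hQ hT⟩
  rw [isUnimodular_iff, det_mul, hdetT]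
  exact hQ.mul hP

/-- If `H` is in lower triangular Hermite shape, `det H = det S`, and
`H M ≡ 0 (colmod S)` for a Smith massager `M` of `A`, then `H` is the lower
triangular row Hermite form of `A`; in particular `H = U A` for some unimodular `U`. -/
theorem hermiteForm_of_detEq_and_colmod {n : ℕ}
    (A S M : Matrix (Fin n) (Fin n) ℤ) (hA : A.det ≠ 0)
    (hS : IsSmithForm A S) (hM : IsSmithMassager A S M)
    (H : Matrix (Fin n) (Fin n) ℤ)
    (hHlow : ∀ i j : Fin n, i < j → H i j = 0)
    (hHdiag : ∀ j, 0 < H j j)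
    (hHred : ∀ i j : Fin n, j < i → 0 ≤ H i j ∧ H i j < H j j)
    (hdet : H.det = S.det)
    (hHM : ColMod S (H * M) 0) :
    IsLowerHermiteFormOf H A :=
  hermiteForm_of_detEq_and_colmod_general A S M hS hM H hHlow hHdiag hHred hdet hHM
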